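/- arXiv:2205.14350 — 4 statements merged into one kernel-verified Lean document; each statement's English description precedes it below -/
import Mathlib

section
/- Let d ≥ 1 be an integer, C₀ > 0, and k₀ ≥ 1 an integer. There exists a constant C > 0, depending only on d, C₀ and k₀, such that for every integer N ≥ 1, every function σ² : ℤ^d → [0,∞) satisfying σ²(k) ≤ C₀ |k|^{1−d} whenever k₀ ≤ |k| ≤ N, σ²(k) ≤ C₀ whenever |k| < k₀, and σ²(k) = 0 whenever |k| > N, and every t ∈ (0,1), one has ∑_{n ∈ ℤ^d, n₁ > 0} 2 e^{−2|n|² t} n₁ σ²(n) ≤ C · min(N², 1/t). -/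
open scoped BigOperators

/-- Euclidean norm of a lattice point `n ∈ ℤ^d`, viewed in `ℝ^d`. -/
noncomputable def znorm {d : ℕ} (n : Fin d → ℤ) : ℝ :=
  Real.sqrt (∑ i, ((n i : ℝ)) ^ 2)

/-!
Split `ℤ^d` into the dyadic shells `4 ^ j ≤ |n|² < 4 ^ (j + 1)`. Where `σ²(n) ≠ 0` we have
`n₁ σ²(n) ≤ |n| σ²(n) ≤ C₀ k₀^(d-1) |n|^(2-d)`, so shell `j`, which has `O(2^(jd))` points,
contributes `O(4^j exp (-2·4^j t))`. Summing over `4^j ≤ N²` gives `O(N²)` by the geometric series,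
and `O(1/t)` by comparison with `∫₀^∞ exp (-2ut) du`.
-/

open Finset Real

lemma mul_exp_neg_le_exp_neg_sub_exp_neg (a b : ℝ) : (b - a) * exp (-b) ≤ exp (-a) - exp (-b) := by
  have h := mul_le_mul_of_nonneg_right (add_one_le_exp (b - a)) (exp_pos (-b)).le
  rw [add_mul, one_mul, ← exp_add, show b - a + -b = -a by ring] at h
  linarith

lemma sum_four_pow_mul_exp_le_inv {t : ℝ} (ht : 0 < t) (J : ℕ) :
    ∑ j ∈ range J, (4 : ℝ) ^ j * exp (-2 * 4 ^ j * t) ≤ 2 / (3 * t) := by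
  -- A discrete form of `∫₀^∞ exp (-2 u t) du = 1 / (2 t)`: each term is dominated by a
  -- difference of the telescoping sequence `E`.
  set E : ℕ → ℝ := fun j => exp (-(4 ^ j * t / 2))
  have hterm : ∀ j, 3 / 2 * t * ((4 : ℝ) ^ j * exp (-2 * 4 ^ j * t)) ≤ E j - E (j + 1) := by
    intro j
    have h := mul_exp_neg_le_exp_neg_sub_exp_neg (4 ^ j * t / 2) (4 ^ (j + 1) * t / 2)
    have hb : -(4 ^ (j + 1) * t / 2) = -2 * 4 ^ j * t := by ring
    rw [hb, show (4 : ℝ) ^ (j + 1) * t / 2 - 4 ^ j * t / 2 = 3 / 2 * t * 4 ^ j by ring] at h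
    simp only [E, hb]
    linarith
  have htel : 3 / 2 * t * ∑ j ∈ range J, (4 : ℝ) ^ j * exp (-2 * 4 ^ j * t) ≤ E 0 - E J := by
    rw [mul_sum, ← neg_le_neg_iff, neg_sub, ← sum_range_sub, ← sum_neg_distrib]
    refine sum_le_sum fun j _ => ?_
    linarith [hterm j]
  have hE0 : E 0 - E J ≤ 1 := by
    have : E 0 ≤ 1 := exp_le_one_iff.2 (by simp only [pow_zero]; linarith)
    linarith [exp_pos (-(4 ^ J * t / 2))]
  rw [le_div_iff₀ (by positivity)]
  linarith

lemma sum_four_pow_mul_exp_le_pow {t : ℝ} (ht : 0 ≤ t) (J : ℕ) :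
    ∑ j ∈ range J, (4 : ℝ) ^ j * exp (-2 * 4 ^ j * t) ≤ 4 ^ J / 3 := by
  calc ∑ j ∈ range J, (4 : ℝ) ^ j * exp (-2 * 4 ^ j * t)
      ≤ ∑ j ∈ range J, (4 : ℝ) ^ j := by
        refine sum_le_sum fun j _ => mul_le_of_le_one_right (by positivity) ?_
        exact exp_le_one_iff.2 (by nlinarith [pow_pos (by norm_num : (0 : ℝ) < 4) j])
    _ = (4 ^ J - 1) / 3 := by rw [geom_sum_eq (by norm_num)]; norm_num
    _ ≤ 4 ^ J / 3 := by linarith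

lemma sum_range_log_four_pow_mul_exp_le {M : ℕ} (hM : M ≠ 0) {t : ℝ} (ht : 0 < t) :
    ∑ j ∈ range (Nat.log 4 M + 1), (4 : ℝ) ^ j * exp (-2 * 4 ^ j * t) ≤
      4 / 3 * min (M : ℝ) (1 / t) := by
  have hM4 : (4 : ℝ) ^ Nat.log 4 M ≤ M := by exact_mod_cast Nat.pow_log_le_self 4 hM
  rw [mul_min_of_nonneg _ _ (by norm_num : (0 : ℝ) ≤ 4 / 3)]
  refine le_min ?_ ?_
  · calc _ ≤ (4 : ℝ) ^ (Nat.log 4 M + 1) / 3 := sum_four_pow_mul_exp_le_pow ht.le _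
      _ ≤ 4 / 3 * M := by rw [pow_succ]; linarith
  · calc _ ≤ 2 / (3 * t) := sum_four_pow_mul_exp_le_inv ht _
      _ ≤ 4 / 3 * (1 / t) := by rw [div_le_iff₀ (by positivity)]; field_simp; norm_num

lemma mul_le_mul_rpow_two_sub_of_bounds {d k₀ : ℕ} (hd : 0 < d) (hk₀ : 1 ≤ k₀) {C₀ r s : ℝ}
    (hC₀ : 0 ≤ C₀) (hr : 0 < r) (hfar : (k₀ : ℝ) ≤ r → s ≤ C₀ * r ^ ((1 : ℝ) - d))
    (hnear : r < k₀ → s ≤ C₀) :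
    r * s ≤ C₀ * k₀ ^ (d - 1) * r ^ ((2 : ℝ) - d) := by
  rcases le_or_gt (k₀ : ℝ) r with hk | hk
  · have hsplit : r * r ^ ((1 : ℝ) - d) = r ^ ((2 : ℝ) - d) := by
      rw [show (2 : ℝ) - d = 1 - d + 1 by ring, rpow_add_one hr.ne', mul_comm]
    calc r * s ≤ r * (C₀ * r ^ ((1 : ℝ) - d)) := mul_le_mul_of_nonneg_left (hfar hk) hr.le
      _ = C₀ * 1 * r ^ ((2 : ℝ) - d) := by rw [← hsplit]; ring
      _ ≤ C₀ * k₀ ^ (d - 1) * r ^ ((2 : ℝ) - d) := by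
          gcongr
          exact one_le_pow₀ (by exact_mod_cast hk₀)
  · have hsplit : r ^ ((2 : ℝ) - d) * r ^ (d - 1) = r := by
      rw [← rpow_natCast, ← rpow_add hr, Nat.cast_sub hd]
      norm_num
    calc r * s ≤ r * C₀ := mul_le_mul_of_nonneg_left (hnear hk) hr.le
      _ = C₀ * r ^ (d - 1) * r ^ ((2 : ℝ) - d) := by linear_combination C₀ * hsplit.symm
      _ ≤ C₀ * k₀ ^ (d - 1) * r ^ ((2 : ℝ) - d) := by gcongr

lemma rpow_two_sub_le_of_two_pow_le {d j : ℕ} {r : ℝ} (hlow : 2 ^ j ≤ r)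
    (hup : r ^ 2 < 4 ^ (j + 1)) :
    r ^ ((2 : ℝ) - d) ≤ 4 ^ (j + 1) / (2 ^ j) ^ d := by
  have hr : 0 < r := lt_of_lt_of_le (by positivity) hlow
  rw [show (2 : ℝ) - d = (2 : ℕ) - (d : ℕ) by norm_num, rpow_sub hr, rpow_natCast, rpow_natCast]
  exact div_le_div₀ (by positivity) hup.le (by positivity)
    (pow_le_pow_left₀ (by positivity) hlow d)

section Lattice

variable {d : ℕ}

lemma znorm_nonneg (n : Fin d → ℤ) : 0 ≤ znorm n := sqrt_nonneg _

lemma abs_le_znorm (n : Fin d → ℤ) (i : Fin d) : |(n i : ℝ)| ≤ znorm n := by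
  rw [← sqrt_sq_eq_abs]
  exact sqrt_le_sqrt (single_le_sum (f := fun j => ((n j : ℝ)) ^ 2)
    (fun j _ => sq_nonneg _) (mem_univ i))

def sqNorm (n : Fin d → ℤ) : ℕ := ∑ i, (n i).natAbs ^ 2

lemma cast_sqNorm (n : Fin d → ℤ) : (sqNorm n : ℝ) = znorm n ^ 2 := by
  rw [znorm, sq_sqrt (by positivity), sqNorm]
  push_cast [Nat.cast_natAbs, sq_abs]
  rfl

lemma natAbs_sq_le_sqNorm (n : Fin d → ℤ) (i : Fin d) : (n i).natAbs ^ 2 ≤ sqNorm n :=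
  single_le_sum (f := fun j => (n j).natAbs ^ 2) (fun _ _ => Nat.zero_le _) (mem_univ i)

lemma four_pow_log_le_znorm_sq {n : Fin d → ℤ} (hn : sqNorm n ≠ 0) :
    (4 : ℝ) ^ Nat.log 4 (sqNorm n) ≤ znorm n ^ 2 := by
  rw [← cast_sqNorm]
  exact_mod_cast Nat.pow_log_le_self 4 hn

lemma sqNorm_le_sq {n : Fin d → ℤ} {N : ℕ} (h : znorm n ≤ N) : sqNorm n ≤ N ^ 2 := by
  have : (sqNorm n : ℝ) ≤ (N : ℝ) ^ 2 := by
    rw [cast_sqNorm]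
    exact pow_le_pow_left₀ (znorm_nonneg n) h 2
  exact_mod_cast this

lemma znorm_sq_lt_four_pow_log_succ (n : Fin d → ℤ) :
    znorm n ^ 2 < (4 : ℝ) ^ (Nat.log 4 (sqNorm n) + 1) := by
  rw [← cast_sqNorm]
  exact_mod_cast Nat.lt_pow_succ_log_self (by norm_num) _

/-- The lattice points `n` with `4 ^ j ≤ |n|² < 4 ^ (j + 1)` (and `n = 0` for `j = 0`). -/
noncomputable def dyadicShell (d j : ℕ) : Finset (Fin d → ℤ) :=
  (Fintype.piFinset fun _ => Icc (-2 ^ (j + 1)) (2 ^ (j + 1))).filter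
    fun n => Nat.log 4 (sqNorm n) = j

lemma mem_dyadicShell {j : ℕ} {n : Fin d → ℤ} :
    n ∈ dyadicShell d j ↔ Nat.log 4 (sqNorm n) = j := by
  refine ⟨fun h => (mem_filter.1 h).2, fun h => mem_filter.2 ⟨?_, h⟩⟩
  refine Fintype.mem_piFinset.2 fun i => mem_Icc.2 (abs_le.1 ?_)
  have hlt : (n i).natAbs ^ 2 < (2 ^ (j + 1)) ^ 2 := by
    rw [← pow_mul, mul_comm, pow_mul, ← h]
    exact (natAbs_sq_le_sqNorm n i).trans_lt (Nat.lt_pow_succ_log_self (by norm_num) _)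
  rw [Int.abs_eq_natAbs]
  exact_mod_cast ((Nat.pow_lt_pow_iff_left two_ne_zero).1 hlt).le

lemma card_dyadicShell_le (d j : ℕ) : ((dyadicShell d j).card : ℝ) ≤ 8 ^ d * (2 ^ j) ^ d := by
  have hIcc : (Icc (-2 ^ (j + 1) : ℤ) (2 ^ (j + 1))).card ≤ 8 * 2 ^ j := by
    rw [Int.card_Icc, Int.toNat_le]
    push_cast
    linarith [pow_succ (2 : ℤ) j, pow_pos (two_pos : (0 : ℤ) < 2) j]
  calc ((dyadicShell d j).card : ℝ) ≤ ((8 * 2 ^ j) ^ d : ℕ) := by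
        refine Nat.cast_le.2 ((card_filter_le _ _).trans ?_)
        rw [Fintype.card_piFinset, prod_const, card_univ, Fintype.card_fin]
        exact Nat.pow_le_pow_left hIcc d
    _ = 8 ^ d * (2 ^ j) ^ d := by push_cast; ring

lemma tsum_le_of_le_on_dyadicShell {g : (Fin d → ℤ) → ℝ} {M : ℕ} {b : ℕ → ℝ}
    (hb0 : ∀ j, 0 ≤ b j) (hsupp : ∀ n, g n ≠ 0 → sqNorm n ≤ M)
    (hb : ∀ n, g n ≠ 0 → g n ≤ b (Nat.log 4 (sqNorm n))) :
    ∑' n, g n ≤ ∑ j ∈ range (Nat.log 4 M + 1), 8 ^ d * (2 ^ j) ^ d * b j := by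
  classical
  have hdisj : (range (Nat.log 4 M + 1) : Set ℕ).PairwiseDisjoint (dyadicShell d) :=
    fun i _ j _ hij => disjoint_left.2 fun n hi hj =>
      hij ((mem_dyadicShell.1 hi).symm.trans (mem_dyadicShell.1 hj))
  rw [tsum_eq_sum (s := (range (Nat.log 4 M + 1)).biUnion (dyadicShell d)), sum_biUnion hdisj]
  · refine sum_le_sum fun j _ => ?_
    calc ∑ n ∈ dyadicShell d j, g n ≤ (dyadicShell d j).card • b j := by
          refine sum_le_card_nsmul _ _ _ fun n hn => ?_
          by_cases h : g n = 0
          · exact h ▸ hb0 j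
          · exact mem_dyadicShell.1 hn ▸ hb n h
      _ ≤ 8 ^ d * (2 ^ j) ^ d * b j := by
          rw [nsmul_eq_mul]
          exact mul_le_mul_of_nonneg_right (card_dyadicShell_le d j) (hb0 j)
  · intro n hn
    by_contra h
    exact hn (mem_biUnion.2 ⟨_, mem_range.2 (Nat.lt_succ_of_le (Nat.log_mono_right (hsupp n h))),
      mem_dyadicShell.2 rfl⟩)

lemma sqNorm_ne_zero {n : Fin d → ℤ} {i : Fin d} (hi : n i ≠ 0) : sqNorm n ≠ 0 :=
  (Nat.pos_of_ne_zero (pow_ne_zero 2 (Int.natAbs_ne_zero.2 hi))).trans_le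
    (natAbs_sq_le_sqNorm n i) |>.ne'

noncomputable def shellBound (d : ℕ) (t : ℝ) (j : ℕ) : ℝ :=
  exp (-2 * 4 ^ j * t) * (4 ^ (j + 1) / (2 ^ j) ^ d)

lemma shellBound_nonneg (d : ℕ) (t : ℝ) (j : ℕ) : 0 ≤ shellBound d t j := by
  unfold shellBound
  positivity

lemma exp_mul_rpow_le_shellBound {n : Fin d → ℤ} (hn : sqNorm n ≠ 0) {t : ℝ} (ht : 0 ≤ t) :
    exp (-2 * znorm n ^ 2 * t) * znorm n ^ ((2 : ℝ) - d) ≤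
      shellBound d t (Nat.log 4 (sqNorm n)) := by
  set j := Nat.log 4 (sqNorm n)
  have hlow := four_pow_log_le_znorm_sq hn
  have hnorm : 2 ^ j ≤ znorm n := by
    refine (pow_le_pow_iff_left₀ (by positivity) (znorm_nonneg n) two_ne_zero).1 ?_
    rwa [← pow_mul, mul_comm, pow_mul, show (2 : ℝ) ^ 2 = 4 by norm_num]
  exact mul_le_mul (exp_le_exp.2 (by nlinarith))
    (rpow_two_sub_le_of_two_pow_le hnorm (znorm_sq_lt_four_pow_log_succ n))
    (rpow_nonneg (znorm_nonneg n) _) (exp_pos _).le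

lemma two_mul_exp_mul_coord_mul_le_shellBound {n : Fin d → ℤ} {i : Fin d} (hi : 0 < n i)
    {A s t : ℝ} (hA : 0 ≤ A) (hs : 0 ≤ s) (ht : 0 ≤ t)
    (hvar : znorm n * s ≤ A * znorm n ^ ((2 : ℝ) - d)) :
    2 * exp (-2 * znorm n ^ 2 * t) * (n i : ℝ) * s ≤
      2 * A * shellBound d t (Nat.log 4 (sqNorm n)) := by
  have hcoord : (n i : ℝ) * s ≤ A * znorm n ^ ((2 : ℝ) - d) :=
    (mul_le_mul_of_nonneg_right ((le_abs_self _).trans (abs_le_znorm n i)) hs).trans hvar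
  calc 2 * exp (-2 * znorm n ^ 2 * t) * (n i : ℝ) * s
      ≤ 2 * exp (-2 * znorm n ^ 2 * t) * (A * znorm n ^ ((2 : ℝ) - d)) := by
        rw [mul_assoc]
        exact mul_le_mul_of_nonneg_left hcoord (by positivity)
    _ = 2 * A * (exp (-2 * znorm n ^ 2 * t) * znorm n ^ ((2 : ℝ) - d)) := by ring
    _ ≤ 2 * A * shellBound d t (Nat.log 4 (sqNorm n)) := by
        gcongr
        exact exp_mul_rpow_le_shellBound (sqNorm_ne_zero hi.ne') ht

lemma sum_card_mul_shellBound_le {M : ℕ} (hM : M ≠ 0) {t : ℝ} (ht : 0 < t) :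
    ∑ j ∈ range (Nat.log 4 M + 1), 8 ^ d * (2 ^ j) ^ d * shellBound d t j ≤
      16 / 3 * 8 ^ d * min (M : ℝ) (1 / t) := by
  calc _ = 4 * 8 ^ d * ∑ j ∈ range (Nat.log 4 M + 1), (4 : ℝ) ^ j * exp (-2 * 4 ^ j * t) := by
        rw [mul_sum]
        refine sum_congr rfl fun j _ => ?_
        rw [shellBound]
        field_simp
        ring
    _ ≤ 4 * 8 ^ d * (4 / 3 * min (M : ℝ) (1 / t)) := by
        gcongr
        exact sum_range_log_four_pow_mul_exp_le hM ht
    _ = _ := by ring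

end Lattice

theorem stmt0 (d : ℕ) (hd : 0 < d) (C₀ : ℝ) (hC₀ : 0 < C₀) (k₀ : ℕ) (hk₀ : 1 ≤ k₀) :
    ∃ C : ℝ, 0 < C ∧
      ∀ N : ℕ, 1 ≤ N →
      ∀ σ2 : (Fin d → ℤ) → ℝ,
        (∀ k, 0 ≤ σ2 k) →
        (∀ k : Fin d → ℤ, (k₀ : ℝ) ≤ znorm k → znorm k ≤ (N : ℝ) →
          σ2 k ≤ C₀ * znorm k ^ ((1 : ℝ) - d)) →
        (∀ k : Fin d → ℤ, znorm k < (k₀ : ℝ) → σ2 k ≤ C₀) →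
        (∀ k : Fin d → ℤ, (N : ℝ) < znorm k → σ2 k = 0) →
      ∀ t : ℝ, 0 < t → t < 1 →
        ∑' n : {n : Fin d → ℤ // 0 < n ⟨0, hd⟩},
            2 * Real.exp (-2 * znorm n.1 ^ 2 * t) * ((n.1 ⟨0, hd⟩ : ℤ) : ℝ) * σ2 n.1
          ≤ C * min ((N : ℝ) ^ 2) (1 / t) := by
  set A := C₀ * k₀ ^ (d - 1)
  refine ⟨2 * A * (16 / 3 * 8 ^ d), by positivity, ?_⟩
  intro N hN σ2 hσ0 hfar hnear hzero t ht _
  set i0 : Fin d := ⟨0, hd⟩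
  set g := {n : Fin d → ℤ | 0 < n i0}.indicator
    fun n => 2 * exp (-2 * znorm n ^ 2 * t) * (n i0 : ℝ) * σ2 n
  have hsupp : ∀ n, g n ≠ 0 → 0 < n i0 ∧ znorm n ≤ N := fun n hn =>
    ⟨Set.mem_of_indicator_ne_zero (s := {n : Fin d → ℤ | 0 < n i0}) hn,
     le_of_not_gt fun hN' => hn (by simp [g, hzero n hN'])⟩
  have hbound : ∀ n, g n ≠ 0 → g n ≤ 2 * A * shellBound d t (Nat.log 4 (sqNorm n)) := by
    intro n hn
    obtain ⟨hpos, hle⟩ := hsupp n hn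
    have hr : 0 < znorm n :=
      lt_of_lt_of_le (by exact_mod_cast hpos) ((le_abs_self _).trans (abs_le_znorm n i0))
    have hmem : n ∈ {n : Fin d → ℤ | 0 < n i0} := hpos
    simp only [g, Set.indicator_of_mem hmem]
    exact two_mul_exp_mul_coord_mul_le_shellBound hpos (by positivity) (hσ0 n) ht.le
      (mul_le_mul_rpow_two_sub_of_bounds hd hk₀ hC₀.le hr (hfar n · hle) (hnear n))
  calc _ = ∑' n, g n := tsum_subtype {n : Fin d → ℤ | 0 < n i0} _
    _ ≤ ∑ j ∈ range (Nat.log 4 (N ^ 2) + 1), 8 ^ d * (2 ^ j) ^ d * (2 * A * shellBound d t j) :=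
        tsum_le_of_le_on_dyadicShell (fun j => by have := shellBound_nonneg d t j; positivity)
          (fun n hn => sqNorm_le_sq (hsupp n hn).2) hbound
    _ = 2 * A * ∑ j ∈ range (Nat.log 4 (N ^ 2) + 1), 8 ^ d * (2 ^ j) ^ d * shellBound d t j := by
        rw [mul_sum]
        exact sum_congr rfl fun _ _ => by ring
    _ ≤ 2 * A * (16 / 3 * 8 ^ d * min ((N ^ 2 : ℕ) : ℝ) (1 / t)) := by
        gcongr
        exact sum_card_mul_shellBound_le (by positivity) ht
    _ = _ := by push_cast; ring
end

section
/- Let a, b ∈ ℝ with a > −1 and b > −1, and let p ≥ 1 be real. There exists a constant C > 0, depending only on a, b and p, such that for every integer N ≥ 2, every real t with N^{−2} < t < 1, and every measurable function I : (0,1) → ℝ satisfying |I(s)| ≤ min(N² s, 1) + log(max(N² s, 1)) for all s ∈ (0,1), one has ∫_0^t (t−s)^a |I(s)|^p s^b ds ≤ C · t^{a+b+1} (log N)^p. -/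
/-!
On `(0, 1)` the bound on `I` is at most `1 + 2 log N ≤ (1 / log 2 + 2) log N`, so `|I|^p` is
bounded by a constant multiple of `(log N)^p`. It remains to bound the Beta-type integral
`∫₀ᵗ (t - s)^a s^b ds` by a multiple of `t^(a+b+1)`: on each half of `[0, t]` one of the two
factors is comparable to a power of `t`, so the integrand is dominated by
`2^|a| t^a s^b + 2^|b| t^b (t - s)^a`, whose integral is computed explicitly.
-/

open MeasureTheory Real Set intervalIntegral

lemma rpow_le_two_rpow_abs_mul_rpow {t x : ℝ} (r : ℝ) (ht : 0 < t) (h₁ : t / 2 ≤ x)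
    (h₂ : x ≤ t) : x ^ r ≤ 2 ^ |r| * t ^ r := by
  have hx : 0 < x := by linarith
  rcases le_or_gt 0 r with hr | hr
  · calc x ^ r ≤ t ^ r := rpow_le_rpow hx.le h₂ hr
      _ ≤ 2 ^ |r| * t ^ r :=
        le_mul_of_one_le_left (rpow_nonneg ht.le r) (one_le_rpow one_le_two (abs_nonneg r))
  · calc x ^ r ≤ (t / 2) ^ r := rpow_le_rpow_of_nonpos (by linarith) h₁ hr.le
      _ = 2 ^ |r| * t ^ r := by
        rw [abs_of_neg hr, rpow_neg zero_le_two, div_rpow ht.le zero_le_two]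
        ring

section BetaIntegral

variable {a b t : ℝ}

lemma intervalIntegrable_sub_rpow (ha : -1 < a) :
    IntervalIntegrable (fun s ↦ (t - s) ^ a) volume 0 t := by
  simpa using ((intervalIntegrable_rpow' ha (a := 0) (b := t)).comp_sub_left t).symm

lemma integral_sub_rpow (ha : -1 < a) :
    ∫ s in (0 : ℝ)..t, (t - s) ^ a = t ^ (a + 1) / (a + 1) := by
  rw [integral_comp_sub_left (fun s ↦ s ^ a), sub_self, sub_zero, integral_rpow (Or.inl ha),
    zero_rpow (by linarith), sub_zero]

noncomputable def betaMajorant (a b t s : ℝ) : ℝ :=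
  2 ^ |a| * t ^ a * s ^ b + 2 ^ |b| * t ^ b * (t - s) ^ a

lemma sub_rpow_mul_rpow_le_betaMajorant (ht : 0 < t) {s : ℝ} (hs : s ∈ Icc 0 t) :
    (t - s) ^ a * s ^ b ≤ betaMajorant a b t s := by
  have hts : 0 ≤ (t - s) ^ a := rpow_nonneg (by linarith [hs.2]) a
  have hs' : 0 ≤ s ^ b := rpow_nonneg hs.1 b
  rcases le_total s (t / 2) with hst | hst
  · calc (t - s) ^ a * s ^ b ≤ 2 ^ |a| * t ^ a * s ^ b := mul_le_mul_of_nonneg_right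
          (rpow_le_two_rpow_abs_mul_rpow a ht (by linarith) (by linarith [hs.1])) hs'
      _ ≤ _ := le_add_of_nonneg_right (mul_nonneg (by positivity) hts)
  · calc (t - s) ^ a * s ^ b ≤ 2 ^ |b| * t ^ b * (t - s) ^ a := by
          rw [mul_comm]; exact mul_le_mul_of_nonneg_right
            (rpow_le_two_rpow_abs_mul_rpow b ht hst hs.2) hts
      _ ≤ _ := le_add_of_nonneg_left (mul_nonneg (by positivity) hs')

lemma intervalIntegrable_betaMajorant (ha : -1 < a) (hb : -1 < b) :
    IntervalIntegrable (betaMajorant a b t) volume 0 t :=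
  ((intervalIntegrable_rpow' hb).const_mul _).add ((intervalIntegrable_sub_rpow ha).const_mul _)

lemma integral_betaMajorant (ha : -1 < a) (hb : -1 < b) (ht : 0 < t) :
    ∫ s in (0 : ℝ)..t, betaMajorant a b t s
      = (2 ^ |a| / (b + 1) + 2 ^ |b| / (a + 1)) * t ^ (a + b + 1) := by
  have h₁ : t ^ (a + b + 1) = t ^ a * t ^ (b + 1) := by rw [← rpow_add ht]; ring_nf
  have h₂ : t ^ (a + b + 1) = t ^ b * t ^ (a + 1) := by rw [← rpow_add ht]; ring_nf
  unfold betaMajorant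
  rw [integral_add ((intervalIntegrable_rpow' hb).const_mul _)
      ((intervalIntegrable_sub_rpow ha).const_mul _), intervalIntegral.integral_const_mul,
    intervalIntegral.integral_const_mul, integral_rpow (Or.inl hb), integral_sub_rpow ha,
    zero_rpow (by linarith)]
  linear_combination (-(2 ^ |a| / (b + 1))) * h₁ - 2 ^ |b| / (a + 1) * h₂

lemma integral_sub_rpow_mul_weight_mul_rpow_le (ha : -1 < a) (hb : -1 < b) (ht : 0 < t)
    {w : ℝ → ℝ} {K : ℝ} (hw₀ : ∀ s ∈ Ioc 0 t, 0 ≤ w s) (hwK : ∀ s ∈ Ioc 0 t, w s ≤ K) :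
    ∫ s in (0 : ℝ)..t, (t - s) ^ a * w s * s ^ b
      ≤ K * (2 ^ |a| / (b + 1) + 2 ^ |b| / (a + 1)) * t ^ (a + b + 1) := by
  have hK : 0 ≤ K := (hw₀ t ⟨ht, le_rfl⟩).trans (hwK t ⟨ht, le_rfl⟩)
  have hnonneg : ∀ s ∈ Ioc 0 t, 0 ≤ (t - s) ^ a * w s * s ^ b := fun s hs ↦
    mul_nonneg (mul_nonneg (rpow_nonneg (by linarith [hs.2]) a) (hw₀ s hs))
      (rpow_nonneg hs.1.le b)
  have hle : ∀ s ∈ Ioc 0 t, (t - s) ^ a * w s * s ^ b ≤ K * betaMajorant a b t s := by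
    intro s hs
    calc (t - s) ^ a * w s * s ^ b = w s * ((t - s) ^ a * s ^ b) := by ring
      _ ≤ K * betaMajorant a b t s :=
        mul_le_mul (hwK s hs) (sub_rpow_mul_rpow_le_betaMajorant ht (Ioc_subset_Icc_self hs))
          (mul_nonneg (rpow_nonneg (by linarith [hs.2]) a) (rpow_nonneg hs.1.le b)) hK
  rw [mul_assoc, ← integral_betaMajorant ha hb ht, ← intervalIntegral.integral_const_mul,
    integral_of_le ht.le, integral_of_le ht.le]
  exact integral_mono_of_nonneg
    ((ae_restrict_iff' measurableSet_Ioc).2 (ae_of_all _ hnonneg))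
    ((intervalIntegrable_betaMajorant ha hb).const_mul K).1
    ((ae_restrict_iff' measurableSet_Ioc).2 (ae_of_all _ hle))

end BetaIntegral

lemma min_add_log_max_le_mul_log {N s : ℝ} (hN : 2 ≤ N) (hs : s ≤ 1) :
    min (N ^ 2 * s) 1 + log (max (N ^ 2 * s) 1) ≤ (1 / log 2 + 2) * log N := by
  have hlog2 : 0 < log 2 := log_pos one_lt_two
  have hlogN : log 2 ≤ log N := log_le_log two_pos hN
  have hmax : log (max (N ^ 2 * s) 1) ≤ 2 * log N := by
    calc log (max (N ^ 2 * s) 1) ≤ log (N ^ 2) :=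
          log_le_log (by positivity) (max_le (by nlinarith) (by nlinarith))
      _ = 2 * log N := by rw [log_pow]; norm_num
  have hone : 1 ≤ log N / log 2 := (one_le_div hlog2).2 hlogN
  calc min (N ^ 2 * s) 1 + log (max (N ^ 2 * s) 1) ≤ log N / log 2 + 2 * log N :=
        add_le_add ((min_le_right _ _).trans hone) hmax
    _ = (1 / log 2 + 2) * log N := by ring

theorem stmt6 (a b p : ℝ) (ha : -1 < a) (hb : -1 < b) (hp : 1 ≤ p) :
    ∃ C : ℝ, 0 < C ∧
      ∀ N : ℕ, 2 ≤ N → ∀ t : ℝ, ((N : ℝ) ^ 2)⁻¹ < t → t < 1 →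
      ∀ I : ℝ → ℝ, Measurable I →
        (∀ s ∈ Set.Ioo (0 : ℝ) 1,
          |I s| ≤ min ((N : ℝ) ^ 2 * s) 1 + Real.log (max ((N : ℝ) ^ 2 * s) 1)) →
        ∫ s in (0 : ℝ)..t, (t - s) ^ a * |I s| ^ p * s ^ b
          ≤ C * t ^ (a + b + 1) * (Real.log N) ^ p := by
  set M : ℝ := 1 / log 2 + 2
  have hM : 0 < M := by positivity
  have hb' : 0 < b + 1 := by linarith
  have ha' : 0 < a + 1 := by linarith
  refine ⟨M ^ p * (2 ^ |a| / (b + 1) + 2 ^ |b| / (a + 1)), by positivity, ?_⟩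
  intro N hN t htN ht1 I _ hI
  have hN' : (2 : ℝ) ≤ N := by exact_mod_cast hN
  have hlogN : 0 < log N := log_pos (by linarith)
  have ht : 0 < t := lt_trans (by positivity) htN
  have hIp : ∀ s ∈ Ioc 0 t, |I s| ^ p ≤ (M * log N) ^ p := fun s hs ↦
    rpow_le_rpow (abs_nonneg _) ((hI s ⟨hs.1, hs.2.trans_lt ht1⟩).trans
      (min_add_log_max_le_mul_log hN' (hs.2.trans ht1.le))) (by linarith)
  calc ∫ s in (0 : ℝ)..t, (t - s) ^ a * |I s| ^ p * s ^ b
      ≤ (M * log N) ^ p * (2 ^ |a| / (b + 1) + 2 ^ |b| / (a + 1)) * t ^ (a + b + 1) :=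
        integral_sub_rpow_mul_weight_mul_rpow_le ha hb ht
          (fun s _ ↦ rpow_nonneg (abs_nonneg _) p) hIp
    _ = M ^ p * (2 ^ |a| / (b + 1) + 2 ^ |b| / (a + 1)) * t ^ (a + b + 1) * log N ^ p := by
        rw [mul_rpow hM.le hlogN.le]; ring
end

section
/- For every real δ with 0 < δ ≤ 1 there exist κ > 0 and C > 0 such that for all real t, u, x with 0 < t < u ≤ 2t, u < 1, and x ≥ 1, one has (u^δ e^{−x u} − t^δ e^{−x t})² ≤ C (u−t)^κ x^{−2δ+2κ}. -/
-- auxiliary: for exponent a ∈ [0,1] and y ≥ 0, y^a ≤ exp y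
lemma aux_rpow_le_exp {a y : ℝ} (ha0 : 0 ≤ a) (ha1 : a ≤ 1) (hy : 0 ≤ y) :
    y ^ a ≤ Real.exp y := by
  rcases le_total y 1 with h | h
  · calc y ^ a ≤ 1 := Real.rpow_le_one hy h ha0
    _ ≤ Real.exp y := by simpa using Real.one_le_exp hy
  · calc y ^ a ≤ y ^ (1 : ℝ) :=
        Real.rpow_le_rpow_of_exponent_le h ha1
    _ = y := Real.rpow_one y
    _ ≤ Real.exp y := (Real.add_one_le_exp y).trans' (by linarith)

-- auxiliary: subadditivity of rpow for exponents in [0,1]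
lemma aux_rpow_subadd {a b p : ℝ} (ha : 0 ≤ a) (hb : 0 ≤ b) (hp0 : 0 ≤ p) (hp1 : p ≤ 1) :
    (a + b) ^ p ≤ a ^ p + b ^ p := by
  have h := NNReal.rpow_add_le_add_rpow a.toNNReal b.toNNReal hp0 hp1
  have h2 := NNReal.coe_le_coe.2 h
  push_cast at h2
  rwa [Real.coe_toNNReal a ha, Real.coe_toNNReal b hb] at h2

theorem stmt7 (δ : ℝ) (hδ0 : 0 < δ) (hδ1 : δ ≤ 1) :
    ∃ κ : ℝ, 0 < κ ∧ ∃ C : ℝ, 0 < C ∧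
      ∀ t u x : ℝ, 0 < t → t < u → u ≤ 2 * t → u < 1 → 1 ≤ x →
        (u ^ δ * Real.exp (-x * u) - t ^ δ * Real.exp (-x * t)) ^ 2
          ≤ C * (u - t) ^ κ * x ^ (-2 * δ + 2 * κ) := by
  refine ⟨δ, hδ0, 4, by norm_num, ?_⟩
  intro t u x ht htu hu2t hu1 hx
  have hx0 : (0 : ℝ) < x := lt_of_lt_of_le one_pos hx
  have ha : (0 : ℝ) < u - t := by linarith
  have ha1 : u - t ≤ 1 := by linarith
  have hat : u - t ≤ t := by linarith
  have hd2 : (0:ℝ) ≤ δ/2 := by linarith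
  have hd21 : δ/2 ≤ 1 := by linarith
  set A : ℝ := (u ^ δ - t ^ δ) * Real.exp (-x * u) with hA
  set B : ℝ := t ^ δ * (Real.exp (-x * t) - Real.exp (-x * u)) with hB
  have hpsi : u ^ δ * Real.exp (-x * u) - t ^ δ * Real.exp (-x * t) = A - B := by
    ring
  -- bound A
  have hut : u ^ δ - t ^ δ ≤ (u - t) ^ δ := by
    have := aux_rpow_subadd (le_of_lt ha) (le_of_lt ht) (le_of_lt hδ0) hδ1
    have hu : (u - t) + t = u := by ring
    rw [hu] at this
    linarith
  have hA0 : 0 ≤ A := by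
    apply mul_nonneg _ (Real.exp_pos _).le
    have : t ^ δ ≤ u ^ δ := Real.rpow_le_rpow (le_of_lt ht) (le_of_lt htu) (le_of_lt hδ0)
    linarith
  have hsplit : (u - t) ^ δ = (u - t) ^ (δ/2) * (u - t) ^ (δ/2) := by
    rw [← Real.rpow_add ha]; ring_nf
  have htd2 : t ^ (δ/2) ≤ 1 := Real.rpow_le_one (le_of_lt ht) (by linarith) hd2
  have hutd2 : (u - t) ^ (δ/2) ≤ t ^ (δ/2) :=
    Real.rpow_le_rpow (le_of_lt ha) hat hd2
  have hApos : 0 < (u - t) ^ (δ/2) := Real.rpow_pos_of_pos ha _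
  have hAle : A ≤ (u - t) ^ (δ/2) := by
    have hexp : Real.exp (-x * u) ≤ 1 := by
      apply Real.exp_le_one_iff.2
      nlinarith
    calc A ≤ (u - t) ^ δ * Real.exp (-x * u) := by
          apply mul_le_mul_of_nonneg_right hut (Real.exp_pos _).le
      _ = ((u - t) ^ (δ/2) * (u - t) ^ (δ/2)) * Real.exp (-x * u) := by rw [hsplit]
      _ ≤ ((u - t) ^ (δ/2) * 1) * 1 := by
          apply mul_le_mul _ hexp (Real.exp_pos _).le (by positivity)
          apply mul_le_mul_of_nonneg_left _ hApos.le
          exact hutd2.trans htd2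
      _ = (u - t) ^ (δ/2) := by ring
  -- bound B
  have hz : (0:ℝ) < x * (u - t) := mul_pos hx0 ha
  have h1e : 1 - Real.exp (-(x * (u - t))) ≤ (x * (u - t)) ^ (δ/2) := by
    rcases le_total (x * (u - t)) 1 with h | h
    · have h1 : 1 - Real.exp (-(x * (u - t))) ≤ x * (u - t) := by
        have := Real.add_one_le_exp (-(x * (u - t)))
        linarith
      calc 1 - Real.exp (-(x * (u - t))) ≤ x * (u - t) := h1
        _ = (x * (u-t)) ^ (1:ℝ) := (Real.rpow_one _).symm
        _ ≤ (x * (u-t)) ^ (δ/2) := Real.rpow_le_rpow_of_exponent_ge hz h hd21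
    · have : (1:ℝ) ≤ (x * (u - t)) ^ (δ/2) := Real.one_le_rpow h hd2
      have := (Real.exp_pos (-(x * (u - t)))).le
      linarith
  have hB0 : 0 ≤ B := by
    apply mul_nonneg (Real.rpow_nonneg (le_of_lt ht) _)
    have : -x * u ≤ -x * t := by nlinarith
    linarith [Real.exp_le_exp.2 this]
  have hexpdiff : Real.exp (-x * t) - Real.exp (-x * u) =
      Real.exp (-x * t) * (1 - Real.exp (-(x * (u - t)))) := by
    rw [mul_sub, mul_one, ← Real.exp_add]; ring_nf
  have hxt : (x * t) ^ (δ/2) * Real.exp (-(x*t)) ≤ 1 := by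
    have h := aux_rpow_le_exp hd2 hd21 (mul_pos hx0 ht).le
    calc (x * t) ^ (δ/2) * Real.exp (-(x*t))
        ≤ Real.exp (x*t) * Real.exp (-(x*t)) :=
          mul_le_mul_of_nonneg_right h (Real.exp_pos _).le
      _ = 1 := by rw [← Real.exp_add]; simp
  have hBle : B ≤ (u - t) ^ (δ/2) := by
    have hkey : t ^ δ * Real.exp (-x * t) * (x * (u - t)) ^ (δ/2) ≤ (u - t) ^ (δ/2) := by
      have hmul : (x * (u - t)) ^ (δ/2) = x ^ (δ/2) * (u - t) ^ (δ/2) :=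
        Real.mul_rpow hx0.le ha.le
      have htδ : t ^ δ = t ^ (δ/2) * t ^ (δ/2) := by
        rw [← Real.rpow_add ht]; ring_nf
      have htx : t ^ (δ/2) * x ^ (δ/2) = (x * t) ^ (δ/2) := by
        rw [Real.mul_rpow hx0.le ht.le]; ring
      have hne : -x * t = -(x*t) := by ring
      calc t ^ δ * Real.exp (-x * t) * (x * (u - t)) ^ (δ/2)
          = t ^ (δ/2) * ((x * t) ^ (δ/2) * Real.exp (-(x*t))) * (u - t) ^ (δ/2) := by
            rw [hmul, htδ, hne]; rw [← htx]; ring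
        _ ≤ 1 * 1 * (u - t) ^ (δ/2) := by
            apply mul_le_mul_of_nonneg_right _ hApos.le
            apply mul_le_mul htd2 hxt (by positivity) (by norm_num)
        _ = (u - t) ^ (δ/2) := by ring
    calc B = t ^ δ * Real.exp (-x * t) * (1 - Real.exp (-(x * (u - t)))) := by
          rw [hB, hexpdiff]; ring
      _ ≤ t ^ δ * Real.exp (-x * t) * (x * (u - t)) ^ (δ/2) := by
          apply mul_le_mul_of_nonneg_left h1e (by positivity)
      _ ≤ (u - t) ^ (δ/2) := hkey
  -- combine
  have habs : |A - B| ≤ 2 * (u - t) ^ (δ/2) := by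
    rw [abs_sub_le_iff]; constructor <;> linarith
  have hsq : (A - B) ^ 2 ≤ (2 * (u - t) ^ (δ/2)) ^ 2 := by
    rw [← sq_abs]
    exact pow_le_pow_left₀ (abs_nonneg _) habs 2
  have hrw : (2 * (u - t) ^ (δ/2)) ^ 2 = 4 * (u - t) ^ δ := by
    rw [mul_pow, hsplit, sq]; ring
  have hxz : x ^ (-2 * δ + 2 * δ) = 1 := by
    norm_num
  rw [hpsi, hxz, mul_one]
  calc (A - B) ^ 2 ≤ (2 * (u - t) ^ (δ/2)) ^ 2 := hsq
    _ = 4 * (u - t) ^ δ := hrw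
end

section
/- Let d ≥ 1 be an integer and let ξ : ℤ^d → ℂ be finitely supported with ξ(−n) = conj(ξ(n)) for all n ∈ ℤ^d. Define Rξ : ℤ^d → ℂ by (Rξ)(n) = i·ξ(n) if n₁ > 0, (Rξ)(n) = −i·ξ(n) if n₁ < 0, and (Rξ)(n) = ξ(n) if n₁ = 0. Then ∑_{n ∈ ℤ^d} (i n₁) ξ(−n) (Rξ)(n) = −2 ∑_{n ∈ ℤ^d, n₁ > 0} n₁ |ξ(n)|², and ∑_{n ∈ ℤ^d} (i n₁) (Rξ)(−n) ξ(n) = 2 ∑_{n ∈ ℤ^d, n₁ > 0} n₁ |ξ(n)|². -/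
open scoped BigOperators

set_option maxHeartbeats 1000000 in
theorem stmt13 (d : ℕ) (hd : 0 < d) (ξ : (Fin d → ℤ) → ℂ)
    (hfin : (Function.support ξ).Finite)
    (hreal : ∀ n, ξ (-n) = starRingEnd ℂ (ξ n))
    (R : (Fin d → ℤ) → ℂ)
    (hR : ∀ n : Fin d → ℤ, R n =
      if 0 < n ⟨0, hd⟩ then Complex.I * ξ n
      else if n ⟨0, hd⟩ < 0 then -Complex.I * ξ n
      else ξ n) :
    (∑' n : Fin d → ℤ, Complex.I * ((n ⟨0, hd⟩ : ℤ) : ℂ) * ξ (-n) * R n)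
        = -2 * ∑' n : {n : Fin d → ℤ // 0 < n ⟨0, hd⟩},
            ((n.1 ⟨0, hd⟩ : ℤ) : ℂ) * (ξ n.1 * starRingEnd ℂ (ξ n.1)) ∧
    (∑' n : Fin d → ℤ, Complex.I * ((n ⟨0, hd⟩ : ℤ) : ℂ) * R (-n) * ξ n)
        = 2 * ∑' n : {n : Fin d → ℤ // 0 < n ⟨0, hd⟩},
            ((n.1 ⟨0, hd⟩ : ℤ) : ℂ) * (ξ n.1 * starRingEnd ℂ (ξ n.1)) := by
  classical
  set i0 : Fin d := ⟨0, hd⟩ with hi0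
  set h : (Fin d → ℤ) → ℂ := fun n =>
    if 0 < n i0 then -((n i0 : ℤ) : ℂ) * (ξ n * starRingEnd ℂ (ξ n)) else 0 with hh
  -- h has support inside support ξ
  have hsupp : Function.support h ⊆ Function.support ξ := by
    intro n hn
    simp only [hh, Function.mem_support, ne_eq] at hn ⊢
    intro hz
    apply hn
    simp [hz]
  have hsum_h : Summable h := summable_of_finite_support (hfin.subset hsupp)
  have hsum_hneg : Summable (fun n => h (-n)) :=
    (Equiv.neg (Fin d → ℤ)).summable_iff.mpr hsum_h
  -- key pointwise identity for the first sum
  have key1 : ∀ n : Fin d → ℤ,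
      Complex.I * ((n i0 : ℤ) : ℂ) * ξ (-n) * R n = h n + h (-n) := by
    intro n
    rw [hR, hreal]
    rcases lt_trichotomy (n i0) 0 with hlt | heq | hgt
    · have h1 : ¬ (0 < n i0) := by omega
      have h2 : 0 < (-n) i0 := by simp [Pi.neg_apply]; omega
      simp only [hh, if_neg h1, if_pos hlt, if_pos h2, Pi.neg_apply, hreal,
        RingHom.map_neg, Int.cast_neg, map_mul]
      have : (starRingEnd ℂ) (starRingEnd ℂ (ξ n)) = ξ n := Complex.conj_conj _
      rw [this]
      ring_nf
      rw [Complex.I_sq]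
      ring
    · simp [hh, heq, Pi.neg_apply]
    · have h2 : ¬ (0 < (-n) i0) := by simp [Pi.neg_apply]; omega
      have h1 : ¬ (n i0 < 0) := by omega
      simp only [hh, if_pos hgt, if_neg h2]
      ring_nf
      rw [Complex.I_sq]
      ring
  -- the second integrand is the negative of the first
  have key2 : ∀ n : Fin d → ℤ,
      Complex.I * ((n i0 : ℤ) : ℂ) * R (-n) * ξ n
        = -(Complex.I * ((n i0 : ℤ) : ℂ) * ξ (-n) * R n) := by
    intro n
    rw [hR n, hR (-n), hreal]
    rcases lt_trichotomy (n i0) 0 with hlt | heq | hgt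
    · have h1 : ¬ (0 < n i0) := by omega
      have h2 : 0 < (-n) i0 := by simp [Pi.neg_apply]; omega
      simp only [if_neg h1, if_pos hlt, if_pos h2]
      ring
    · simp [heq, Pi.neg_apply]
    · have h2 : ¬ (0 < (-n) i0) := by simp [Pi.neg_apply]; omega
      have h2' : (-n) i0 < 0 := by simp [Pi.neg_apply]; omega
      have h1 : ¬ (n i0 < 0) := by omega
      simp only [if_pos hgt, if_neg h2, if_pos h2', if_neg h1]
      ring
  -- sum of h over everything equals minus the subtype sum
  have hsub : (∑' n : Fin d → ℤ, h n)
      = -∑' n : {n : Fin d → ℤ // 0 < n i0},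
          ((n.1 i0 : ℤ) : ℂ) * (ξ n.1 * starRingEnd ℂ (ξ n.1)) := by
    have e1 : (∑' n : {n : Fin d → ℤ // 0 < n i0},
        ((n.1 i0 : ℤ) : ℂ) * (ξ n.1 * starRingEnd ℂ (ξ n.1)))
          = ∑' n : Fin d → ℤ, Set.indicator {m : Fin d → ℤ | 0 < m i0}
              (fun n => ((n i0 : ℤ) : ℂ) * (ξ n * starRingEnd ℂ (ξ n))) n :=
      tsum_subtype {m : Fin d → ℤ | 0 < m i0}
        (fun n => ((n i0 : ℤ) : ℂ) * (ξ n * starRingEnd ℂ (ξ n)))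
    rw [e1, ← tsum_neg]
    congr 1
    funext n
    by_cases hn : 0 < n i0
    · simp [hh, Set.indicator, hn]
    · simp [hh, Set.indicator, hn]
  have hnegsum : (∑' n : Fin d → ℤ, h (-n)) = ∑' n : Fin d → ℤ, h n := by
    have := (Equiv.neg (Fin d → ℤ)).tsum_eq h
    simpa using this
  have hfirst : (∑' n : Fin d → ℤ, Complex.I * ((n i0 : ℤ) : ℂ) * ξ (-n) * R n)
      = -2 * ∑' n : {n : Fin d → ℤ // 0 < n i0},
          ((n.1 i0 : ℤ) : ℂ) * (ξ n.1 * starRingEnd ℂ (ξ n.1)) := by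
    calc (∑' n : Fin d → ℤ, Complex.I * ((n i0 : ℤ) : ℂ) * ξ (-n) * R n)
        = ∑' n : Fin d → ℤ, (h n + h (-n)) := by
          exact tsum_congr key1
      _ = (∑' n : Fin d → ℤ, h n) + ∑' n : Fin d → ℤ, h (-n) :=
          Summable.tsum_add hsum_h hsum_hneg
      _ = 2 * ∑' n : Fin d → ℤ, h n := by rw [hnegsum]; ring
      _ = -2 * ∑' n : {n : Fin d → ℤ // 0 < n i0},
            ((n.1 i0 : ℤ) : ℂ) * (ξ n.1 * starRingEnd ℂ (ξ n.1)) := by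
          rw [hsub]; ring
  constructor
  · exact hfirst
  · calc (∑' n : Fin d → ℤ, Complex.I * ((n i0 : ℤ) : ℂ) * R (-n) * ξ n)
        = ∑' n : Fin d → ℤ, -(Complex.I * ((n i0 : ℤ) : ℂ) * ξ (-n) * R n) :=
          tsum_congr key2
      _ = -∑' n : Fin d → ℤ, Complex.I * ((n i0 : ℤ) : ℂ) * ξ (-n) * R n :=
          tsum_neg
      _ = 2 * ∑' n : {n : Fin d → ℤ // 0 < n i0},
            ((n.1 i0 : ℤ) : ℂ) * (ξ n.1 * starRingEnd ℂ (ξ n.1)) := by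
          rw [hfirst]; ring
end
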